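/- For every simple graph G and every closed walk c₁ : I_N → G in G, there exist n ≥ 3 and a closed walk c₂ : I_N' → C_n in the cycle graph C_n (namely n = max(5, 1 + number of non-stationary steps of c₁) and c₂ a padded walk going once around C_n) such that for every graph map f : G → C_n, the closed walks f ∘ c₁ and c₂ are not freely A-homotopic as loops (after padding to a common length). -/

import Mathlib

/-!
A graph map into `C_n` lifts step by step to `ℤ` (`+1`, `-1` or `0` per step), which gives closed
walks an integer winding number. For `n ≥ 5` the two ways around any square of a homotopy lift to
the same integer, since their difference is a multiple of `n` of absolute value at most `4`; hence
the winding number is invariant under free A-homotopy, and padding does not change it. The walk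
going once around `C_n` has winding number `n`, whereas `f ∘ c₁` is a closed walk of length
`N < n`, so its winding number is a multiple of `n` of absolute value at most `N`, i.e. `0`.
-/

/-- The path graph `I_N` on vertices `{0, 1, …, N}`, with `i` adjacent to `j` iff `|i - j| = 1`. -/
def pathG (N : ℕ) : SimpleGraph (Fin (N + 1)) where
  Adj i j := (i : ℕ) + 1 = (j : ℕ) ∨ (j : ℕ) + 1 = (i : ℕ)
  symm := ⟨fun i j h => h.symm⟩
  loopless := ⟨fun i h => by rcases h with h | h <;> omega⟩

/-- The cycle graph `C_n` on vertices `ZMod n`, with `i` adjacent to `j` iff `j = i + 1` or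
`j = i - 1` (for `n ≥ 3`). -/
def cycleG (n : ℕ) : SimpleGraph (ZMod n) :=
  SimpleGraph.fromRel (fun i j => j = i + 1)

/-- A graph map `f : G → H`: for adjacent `u v` in `G`, either `f u = f v` or
`f u, f v` are adjacent in `H`. -/
def IsGraphMap {V W : Type*} (G : SimpleGraph V) (H : SimpleGraph W) (f : V → W) : Prop :=
  ∀ ⦃u v⦄, G.Adj u v → f u = f v ∨ H.Adj (f u) (f v)

/-- Padding a walk `c : I_N → G` to length `N' ≥ N`: the walk `i ↦ c (min i N)`. -/
def padWalk {V : Type*} {N : ℕ} (N' : ℕ) (c : Fin (N + 1) → V) : Fin (N' + 1) → V :=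
  fun i => c ⟨min (i : ℕ) N, by omega⟩

/-- Closed walks `c, c' : I_N → G` are freely A-homotopic as loops if there are `k` and a graph
map `α : I_N □ I_k → G` with `α (i, 0) = c i`, `α (i, k) = c' i`, and `α (0, j) = α (N, j)`
for all `j`. -/
def FreeLoopAHomotopic {V : Type*} (G : SimpleGraph V) (N : ℕ) (c c' : Fin (N + 1) → V) : Prop :=
  ∃ (k : ℕ) (α : Fin (N + 1) × Fin (k + 1) → V),
    IsGraphMap ((pathG N).boxProd (pathG k)) G α ∧
    (∀ i, α (i, 0) = c i) ∧ (∀ i, α (i, Fin.last k) = c' i) ∧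
    (∀ j, α (0, j) = α (Fin.last N, j))

open Finset

theorem IsGraphMap.comp {U V W : Type*} {G : SimpleGraph U} {H : SimpleGraph V}
    {I : SimpleGraph W} {g : V → W} {f : U → V} (hg : IsGraphMap H I g) (hf : IsGraphMap G H f) :
    IsGraphMap G I (g ∘ f) := by
  intro u v huv
  rcases hf huv with h | h
  · exact Or.inl (congrArg g h)
  · exact hg h

theorem IsGraphMap.of_boxProd_left {U V W : Type*} {G : SimpleGraph U} {G' : SimpleGraph V}
    {H : SimpleGraph W} {α : U × V → W} (hα : IsGraphMap (G.boxProd G') H α) (y : V) :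
    IsGraphMap G H (fun x => α (x, y)) :=
  fun _ _ h => hα (SimpleGraph.boxProd_adj_left.2 h)

theorem IsGraphMap.of_boxProd_right {U V W : Type*} {G : SimpleGraph U} {G' : SimpleGraph V}
    {H : SimpleGraph W} {α : U × V → W} (hα : IsGraphMap (G.boxProd G') H α) (x : U) :
    IsGraphMap G' H (fun y => α (x, y)) :=
  fun _ _ h => hα (SimpleGraph.boxProd_adj_right.2 h)

theorem Fin.clamp_zero (K : ℕ) : Fin.clamp 0 K = 0 := by ext; simp

theorem Fin.clamp_self (K : ℕ) : Fin.clamp K K = Fin.last K := by ext; simp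

theorem pathG_adj_castSucc_succ {N : ℕ} (i : Fin N) : (pathG N).Adj i.castSucc i.succ :=
  Or.inl (by simp)

theorem pathG_adj_clamp {N i : ℕ} (hi : i < N) :
    (pathG N).Adj (Fin.clamp i N) (Fin.clamp (i + 1) N) :=
  Or.inl (by simp only [Fin.coe_clamp]; omega)

theorem cycleG_adj_add_one {n : ℕ} [Fact (1 < n)] (a : ZMod n) : (cycleG n).Adj a (a + 1) :=
  (SimpleGraph.fromRel_adj _ _ _).2 ⟨by simp, Or.inl rfl⟩

theorem isGraphMap_natCast {n : ℕ} [Fact (1 < n)] (K : ℕ) :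
    IsGraphMap (pathG K) (cycleG n) (fun i => ((i : ℕ) : ZMod n)) := by
  rintro u v (h | h) <;> right <;> dsimp only
  · rw [← h, Nat.cast_succ]
    exact cycleG_adj_add_one _
  · rw [← h, Nat.cast_succ]
    exact (cycleG_adj_add_one _).symm

namespace cycleG

variable {n : ℕ}

/-- The lift to `ℤ` of a step of a walk in `C_n`: `1` forwards, `-1` backwards, `0` if
stationary. -/
def stepDeg (a b : ZMod n) : ℤ := if b = a then 0 else if b = a + 1 then 1 else -1

theorem stepDeg_self (a : ZMod n) : stepDeg a a = 0 := if_pos rfl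

theorem stepDeg_add_one [Fact (1 < n)] (a : ZMod n) : stepDeg a (a + 1) = 1 := by
  simp [stepDeg]

theorem abs_stepDeg_le_one (a b : ZMod n) : |stepDeg a b| ≤ 1 := by
  unfold stepDeg; split_ifs <;> simp

theorem intCast_stepDeg {a b : ZMod n} (h : a = b ∨ (cycleG n).Adj a b) :
    (stepDeg a b : ZMod n) = b - a := by
  rcases h with rfl | h
  · simp [stepDeg_self]
  obtain ⟨hne, rfl | rfl⟩ := (SimpleGraph.fromRel_adj _ _ _).1 h
  · simp [stepDeg, hne.symm]
  · unfold stepDeg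
    split_ifs with h₁ h₂
    · exact absurd h₁.symm hne
    · -- `b = b + 1 + 1` forces `2 = 0` in `ZMod n`
      push_cast
      linear_combination -h₂
    · push_cast
      ring

theorem stepDeg_add_stepDeg_comm (hn : 4 < n) {a b a' b' : ZMod n}
    (hab : a = b ∨ (cycleG n).Adj a b) (hbb' : b = b' ∨ (cycleG n).Adj b b')
    (haa' : a = a' ∨ (cycleG n).Adj a a') (ha'b' : a' = b' ∨ (cycleG n).Adj a' b') :
    stepDeg a b + stepDeg b b' = stepDeg a a' + stepDeg a' b' := by
  rw [← sub_eq_zero]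
  refine Int.eq_zero_of_abs_lt_dvd (m := n) ?_ ?_
  · rw [← ZMod.intCast_zmod_eq_zero_iff_dvd]
    push_cast
    rw [intCast_stepDeg hab, intCast_stepDeg hbb', intCast_stepDeg haa', intCast_stepDeg ha'b']
    ring
  · have := abs_le.1 (abs_stepDeg_le_one a b)
    have := abs_le.1 (abs_stepDeg_le_one b b')
    have := abs_le.1 (abs_stepDeg_le_one a a')
    have := abs_le.1 (abs_stepDeg_le_one a' b')
    rw [abs_lt]
    omega

def winding {K : ℕ} (c : Fin (K + 1) → ZMod n) : ℤ :=
  ∑ i ∈ range K, stepDeg (c (Fin.clamp i K)) (c (Fin.clamp (i + 1) K))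

variable {K : ℕ}

theorem abs_winding_le (c : Fin (K + 1) → ZMod n) : |winding c| ≤ K := by
  calc |winding c|
      ≤ ∑ i ∈ range K, |stepDeg (c (Fin.clamp i K)) (c (Fin.clamp (i + 1) K))| :=
        abs_sum_le_sum_abs _ _
    _ ≤ ∑ _i ∈ range K, 1 := sum_le_sum fun _ _ => abs_stepDeg_le_one _ _
    _ = K := by simp

theorem intCast_winding {c : Fin (K + 1) → ZMod n} (hc : IsGraphMap (pathG K) (cycleG n) c) :
    (winding c : ZMod n) = c (Fin.last K) - c 0 := by
  have hsteps : ∀ i ∈ range K, (stepDeg (c (Fin.clamp i K)) (c (Fin.clamp (i + 1) K)) : ZMod n)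
      = c (Fin.clamp (i + 1) K) - c (Fin.clamp i K) :=
    fun i hi => intCast_stepDeg (hc (pathG_adj_clamp (mem_range.1 hi)))
  rw [winding, Int.cast_sum, sum_congr rfl hsteps,
    sum_range_sub (fun i => c (Fin.clamp i K)), Fin.clamp_zero, Fin.clamp_self]

theorem winding_eq_zero_of_closed {c : Fin (K + 1) → ZMod n}
    (hc : IsGraphMap (pathG K) (cycleG n) c) (hcl : c 0 = c (Fin.last K)) (hK : K < n) :
    winding c = 0 := by
  refine Int.eq_zero_of_abs_lt_dvd (m := n) ?_ ((abs_winding_le c).trans_lt (by exact_mod_cast hK))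
  rw [← ZMod.intCast_zmod_eq_zero_iff_dvd, intCast_winding hc, hcl, sub_self]

theorem winding_natCast [Fact (1 < n)] : winding (fun i : Fin (K + 1) => ((i : ℕ) : ZMod n)) = K := by
  have hsteps : ∀ i ∈ range K,
      stepDeg (((Fin.clamp i K : ℕ) : ZMod n)) ((Fin.clamp (i + 1) K : ℕ) : ZMod n) = 1 := by
    intro i hi
    have hi := mem_range.1 hi
    rw [Fin.coe_clamp, Fin.coe_clamp, min_eq_left hi.le, min_eq_left hi, Nat.cast_succ,
      stepDeg_add_one]
  rw [winding, sum_congr rfl hsteps]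
  simp

theorem winding_padWalk {N : ℕ} (hNK : N ≤ K) (c : Fin (N + 1) → ZMod n) :
    winding (padWalk K c) = winding c := by
  obtain ⟨m, rfl⟩ := Nat.exists_eq_add_of_le hNK
  have hpad : ∀ i, padWalk (N + m) c (Fin.clamp i (N + m)) = c (Fin.clamp i N) := by
    intro i
    simp only [padWalk, Fin.coe_clamp]
    congr 2
    omega
  have htail : ∀ x ∈ range m,
      stepDeg (c (Fin.clamp (N + x) N)) (c (Fin.clamp (N + x + 1) N)) = 0 := by
    intro x _
    rw [show Fin.clamp (N + x + 1) N = Fin.clamp (N + x) N by ext; simp; omega, stepDeg_self]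
  simp only [winding, hpad]
  rw [sum_range_add, sum_eq_zero htail, add_zero]

/-- By `stepDeg_add_stepDeg_comm` on each square, the difference of the windings telescopes to
the difference of the lifts of the two end edges `c 0 — c' 0` and `c K — c' K`, which coincide. -/
theorem winding_eq_of_adj (hn : 4 < n) {c c' : Fin (K + 1) → ZMod n}
    (hc : IsGraphMap (pathG K) (cycleG n) c) (hc' : IsGraphMap (pathG K) (cycleG n) c')
    (hcc' : ∀ i, c i = c' i ∨ (cycleG n).Adj (c i) (c' i))
    (hcl : c 0 = c (Fin.last K)) (hcl' : c' 0 = c' (Fin.last K)) :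
    winding c = winding c' := by
  set r : ℕ → ℤ := fun i => stepDeg (c (Fin.clamp i K)) (c' (Fin.clamp i K))
  have hsq : ∀ i ∈ range K,
      stepDeg (c (Fin.clamp i K)) (c (Fin.clamp (i + 1) K))
        - stepDeg (c' (Fin.clamp i K)) (c' (Fin.clamp (i + 1) K)) = r i - r (i + 1) := by
    intro i hi
    have hadj := pathG_adj_clamp (mem_range.1 hi)
    linarith [stepDeg_add_stepDeg_comm hn (hc hadj) (hcc' _) (hcc' _) (hc' hadj)]
  have hends : r 0 = r K := by
    simp only [r, Fin.clamp_zero, Fin.clamp_self, hcl, hcl']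
  have hdiff : winding c - winding c' = r 0 - r K := by
    rw [winding, winding, ← sum_sub_distrib, sum_congr rfl hsq, sum_range_sub']
  linarith

theorem winding_eq_of_freeLoopAHomotopic (hn : 4 < n) {c c' : Fin (K + 1) → ZMod n}
    (h : FreeLoopAHomotopic (cycleG n) K c c') : winding c = winding c' := by
  obtain ⟨k, α, hα, hc, hc', hcl⟩ := h
  have hrows : ∀ j : Fin (k + 1), winding c = winding (fun i => α (i, j)) := by
    refine Fin.induction ?_ fun j ih => ?_
    · simp only [hc]
    · rw [ih]
      exact winding_eq_of_adj hn (hα.of_boxProd_left _) (hα.of_boxProd_left _)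
        (fun i => hα.of_boxProd_right i (pathG_adj_castSucc_succ j)) (hcl _) (hcl _)
  simp only [hrows (Fin.last k), hc']

end cycleG

/-- For every simple graph `G` and closed walk `c₁ : I_N → G`, there exist `n ≥ 3` and a closed
walk `c₂ : I_N' → C_n` such that for every graph map `f : G → C_n`, the loops `f ∘ c₁` and `c₂`
are not freely A-homotopic after padding to a common length. -/
theorem exists_cycle_walk_not_freely_homotopic {V : Type*} (G : SimpleGraph V) (N : ℕ)
    (c₁ : Fin (N + 1) → V) (hc₁ : IsGraphMap (pathG N) G c₁)
    (hclosed : c₁ 0 = c₁ (Fin.last N)) :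
    ∃ (n N' : ℕ), 3 ≤ n ∧
      ∃ c₂ : Fin (N' + 1) → ZMod n,
        IsGraphMap (pathG N') (cycleG n) c₂ ∧ c₂ 0 = c₂ (Fin.last N') ∧
        ∀ f : V → ZMod n, IsGraphMap G (cycleG n) f →
          ∀ K, N ≤ K → N' ≤ K →
            ¬ FreeLoopAHomotopic (cycleG n) K (padWalk K (f ∘ c₁)) (padWalk K c₂) := by
  set n := max 5 (N + 1)
  have hn : 4 < n := by omega
  have : Fact (1 < n) := ⟨by omega⟩
  refine ⟨n, n, by omega, fun i => ((i : ℕ) : ZMod n), isGraphMap_natCast n, by simp, ?_⟩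
  intro f hf K hNK hnK hhom
  have hwind := cycleG.winding_eq_of_freeLoopAHomotopic hn hhom
  rw [cycleG.winding_padWalk hNK, cycleG.winding_padWalk hnK, cycleG.winding_natCast,
    cycleG.winding_eq_zero_of_closed (hf.comp hc₁) (congrArg f hclosed) (by omega)] at hwind
  omega
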